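/- For every prime power q, f(q³, C_{10}) ≤ 2q², where C_{10} denotes the cycle of length 10. -/

import Mathlib

open SimpleGraph

/-- `G` is an `(r,k)`-graph: its vertex set can be partitioned into `r` parts,
each of size at most `k`, with at least one edge between any two distinct parts. -/
def IsRKGraph {V : Type} [Fintype V] (G : SimpleGraph V) (r k : ℕ) : Prop :=
  ∃ P : Fin r → Finset V,
    (∀ v : V, ∃! i, v ∈ P i) ∧
    (∀ i, (P i).card ≤ k) ∧
    ∀ i j : Fin r, i ≠ j → ∃ u ∈ P i, ∃ w ∈ P j, G.Adj u w

/-- `G` contains a subgraph isomorphic to `H`. -/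
def ContainsSub {W V : Type} (H : SimpleGraph W) (G : SimpleGraph V) : Prop :=
  ∃ f : H →g G, Function.Injective f

/-- `f(r,H)`: the minimum `k` for which there exists an `H`-free `(r,k)`-graph. -/
noncomputable def fGraph {W : Type} (H : SimpleGraph W) (r : ℕ) : ℕ :=
  sInf {k | ∃ (n : ℕ) (G : SimpleGraph (Fin n)), ¬ ContainsSub H G ∧ IsRKGraph G r k}

/-!
The witness is the Wenger graph on points `p` and lines `l` of `𝔽_q⁵`, with `p ~ l` iff
`l (j+1) = p (j+1) + l 0 * p j` for `j < 4`.

It has no `C₁₀`: along a cycle `P₀ L₀ P₁ … P₄ L₄` two points on a common line differ by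
`a (1, x, …, x⁴)` with `x = -l 0`, so the steps `P_{t+1} - P_t = a_t (x_t^j)_j` telescope to
`∑ a_t x_t^j = 0` for `j ≤ 4`, with every `a_t ≠ 0`. By Vandermonde each node `x_t` is then
repeated, while consecutive nodes differ; but a proper colouring of the 5-cycle always uses some
colour only once.

Grouping points by `(p 0, p 3, p 4)` and lines by `(l 0, l 1, l 2)` gives `q³` parts of size
`2q²`, and for every point key and line key the incidence equations have a solution, so any two
parts are joined by an edge.
-/

open Finset

open Polynomial in
theorem exists_ne_eq_of_sum_mul_pow_eq_zero {ι R : Type*} [CommRing R] [IsDomain R]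
    [DecidableEq ι] {s : Finset ι} {a x : ι → R}
    (hsum : ∀ j < #s, ∑ u ∈ s, a u * x u ^ j = 0) {t : ι} (ht : t ∈ s) (hat : a t ≠ 0) :
    ∃ u ∈ s, u ≠ t ∧ x u = x t := by
  by_contra! hx
  -- pair the moments with the polynomial vanishing exactly at the other nodes
  set P := Lagrange.nodal (s.erase t) x
  have hdeg : P.natDegree < #s := by
    rw [Lagrange.natDegree_nodal, card_erase_of_mem ht]
    exact Nat.sub_lt (card_pos.2 ⟨t, ht⟩) one_pos
  have hP : ∑ u ∈ s, a u * P.eval (x u) = 0 := by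
    simp_rw [eval_eq_sum_range' hdeg, mul_sum]
    rw [sum_comm]
    refine sum_eq_zero fun j hj => ?_
    simp_rw [mul_left_comm (a _), ← mul_sum]
    rw [hsum j (mem_range.1 hj), mul_zero]
  rw [sum_eq_single_of_mem t ht fun u hu hut => by
    rw [Lagrange.eval_nodal_at_node (mem_erase.2 ⟨hut, hu⟩), mul_zero]] at hP
  refine mul_ne_zero hat (Lagrange.eval_nodal_not_at_node fun u hu => ?_) hP
  exact (hx u (mem_of_mem_erase hu) (ne_of_mem_erase hu)).symm

theorem exists_forall_ne_of_forall_ne_add_one {α : Type*} {x : Fin 5 → α}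
    (hx : ∀ t, x t ≠ x (t + 1)) : ∃ t, ∀ s ≠ t, x s ≠ x t := by
  by_contra! htwin
  have hopp : ∀ t, x (t + 2) = x t ∨ x (t + 3) = x t := by
    intro t
    obtain ⟨s, hst, hs⟩ := htwin t
    have hs' : s = t + 1 ∨ s = t + 2 ∨ s = t + 3 ∨ s = t + 4 := by
      clear hs; revert s t; decide
    rcases hs' with rfl | rfl | rfl | rfl
    · exact absurd hs.symm (hx t)
    · exact .inl hs
    · exact .inr hs
    · have hpred : t + 4 + 1 = t := by clear hs hst; revert t; decide
      exact absurd (by rw [hpred]; exact hs) (hx (t + 4))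
  have h0 := hopp 0; have h1 := hopp 1; have h2 := hopp 2; have h3 := hopp 3; have h4 := hopp 4
  have n0 := hx 0; have n1 := hx 1; have n2 := hx 2; have n3 := hx 3; have n4 := hx 4
  simp only [Fin.reduceAdd] at *
  grind

theorem fGraph_le_of_isRKGraph {W V : Type} [Fintype V] {H : SimpleGraph W} {G : SimpleGraph V}
    {r k : ℕ} (hfree : ¬ ContainsSub H G) (hG : IsRKGraph G r k) : fGraph H r ≤ k := by
  classical
  let e := Fintype.equivFin V
  refine Nat.sInf_le ⟨_, G.map e.toEmbedding, fun ⟨f, hf⟩ =>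
    hfree ⟨(Iso.map e G).symm.toHom.comp f, (Iso.map e G).symm.injective.comp hf⟩, ?_⟩
  obtain ⟨P, hcover, hcard, hadj⟩ := hG
  refine ⟨fun i => (P i).map e.toEmbedding, fun v => ?_, fun i => (card_map _).trans_le (hcard i),
    fun i j hij => ?_⟩
  · simpa [mem_map_equiv] using hcover (e.symm v)
  · obtain ⟨u, hu, w, hw, huw⟩ := hadj i j hij
    exact ⟨e u, mem_map_of_mem _ hu, e w, mem_map_of_mem _ hw, (Iso.map e G).map_adj_iff.2 huw⟩

theorem isRKGraph_of_key {V : Type} {ι : Type*} [Fintype V] [Fintype ι] [DecidableEq ι]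
    (G : SimpleGraph V) (κ : V → ι) {k : ℕ} (hcard : ∀ i, #{v | κ v = i} ≤ k)
    (hadj : ∀ i j, i ≠ j → ∃ u w, κ u = i ∧ κ w = j ∧ G.Adj u w) :
    IsRKGraph G (Fintype.card ι) k := by
  let e := Fintype.equivFin ι
  refine ⟨fun i => {v | κ v = e.symm i}, fun v => ⟨e (κ v), by simp, fun i hi => ?_⟩,
    fun i => hcard _, fun i j hij => ?_⟩
  · simp_all
  · obtain ⟨u, w, hu, hw, huw⟩ := hadj _ _ (e.symm.injective.ne hij)
    exact ⟨u, by simpa using hu, w, by simpa using hw, huw⟩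

section Wenger

variable {F : Type*} [Field F] {k : ℕ}

def WengerIncident (p l : Fin (k + 1) → F) : Prop :=
  ∀ j : Fin k, l j.succ = p j.succ + l 0 * p j.castSucc

variable (F k) in
def wengerGraph : SimpleGraph ((Fin (k + 1) → F) ⊕ (Fin (k + 1) → F)) where
  Adj
    | .inl p, .inr l => WengerIncident p l
    | .inr l, .inl p => WengerIncident p l
    | _, _ => False
  symm := ⟨by rintro (p | l) (p' | l') h <;> exact h⟩
  loopless := ⟨by rintro (p | l) h <;> exact h⟩

theorem exists_eq_inr_of_wengerGraph_adj {p : Fin (k + 1) → F} {v}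
    (h : (wengerGraph F k).Adj (.inl p) v) : ∃ l, v = .inr l ∧ WengerIncident p l := by
  rcases v with _ | l
  exacts [h.elim, ⟨l, rfl, h⟩]

theorem exists_eq_inl_of_wengerGraph_adj {l : Fin (k + 1) → F} {v}
    (h : (wengerGraph F k).Adj (.inr l) v) : ∃ p, v = .inl p ∧ WengerIncident p l := by
  rcases v with p | _
  exacts [⟨p, rfl, h⟩, h.elim]

namespace WengerIncident

variable {p p' l l' : Fin (k + 1) → F}

theorem sub_eq_mul_pow (hp : WengerIncident p l) (hp' : WengerIncident p' l) (j : Fin (k + 1)) :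
    p' j - p j = (p' 0 - p 0) * (-l 0) ^ (j : ℕ) := by
  induction j using Fin.induction with
  | zero => simp
  | succ j ih =>
    rw [Fin.val_castSucc] at ih
    rw [Fin.val_succ]
    linear_combination hp j - hp' j - l 0 * ih

theorem point_eq_of_apply_zero_eq (hp : WengerIncident p l) (hp' : WengerIncident p' l)
    (h : p 0 = p' 0) : p = p' := by
  funext j
  simpa [h, sub_eq_zero, eq_comm] using hp.sub_eq_mul_pow hp' j

theorem line_eq_of_apply_zero_eq (hl : WengerIncident p l) (hl' : WengerIncident p l')
    (h : l 0 = l' 0) : l = l' := by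
  funext j
  induction j using Fin.cases with
  | zero => exact h
  | succ j => rw [hl j, hl' j, h]

theorem false_of_pentagon (hk : 4 ≤ k) {P L : Fin 5 → Fin (k + 1) → F}
    (hinc : ∀ t, WengerIncident (P t) (L t)) (hinc' : ∀ t, WengerIncident (P (t + 1)) (L t))
    (hP : ∀ t, P t ≠ P (t + 1)) (hL : ∀ t, L t ≠ L (t + 1)) : False := by
  have hmoment : ∀ j < #(univ : Finset (Fin 5)),
      ∑ t, (P (t + 1) 0 - P t 0) * (-L t 0) ^ j = 0 := by
    intro j hj
    rw [card_univ, Fintype.card_fin] at hj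
    let j' : Fin (k + 1) := ⟨j, by omega⟩
    calc ∑ t, (P (t + 1) 0 - P t 0) * (-L t 0) ^ j = ∑ t, (P (t + 1) j' - P t j') :=
          sum_congr rfl fun t _ => ((hinc t).sub_eq_mul_pow (hinc' t) j').symm
      _ = 0 := by
          rw [sum_sub_distrib, sub_eq_zero]
          exact Fintype.sum_equiv (Equiv.addRight 1) _ _ fun _ => rfl
  have hnode : ∀ t, -L t 0 ≠ -L (t + 1) 0 := fun t h =>
    hL t ((hinc' t).line_eq_of_apply_zero_eq (hinc (t + 1)) (neg_inj.1 h))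
  obtain ⟨t, ht⟩ := exists_forall_ne_of_forall_ne_add_one hnode
  obtain ⟨s, -, hst, hs⟩ := exists_ne_eq_of_sum_mul_pow_eq_zero hmoment (mem_univ t)
    fun h => hP t ((hinc t).point_eq_of_apply_zero_eq (hinc' t) (sub_eq_zero.1 h).symm)
  exact ht s hst hs

end WengerIncident

theorem exists_wengerIncident_pentagon {w : Fin 10 → (Fin (k + 1) → F) ⊕ (Fin (k + 1) → F)}
    (hw : ∀ i, (wengerGraph F k).Adj (w i) (w (i + 1))) (hinj : Function.Injective w)
    (h0 : ∃ p, w 0 = .inl p) :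
    ∃ P L : Fin 5 → Fin (k + 1) → F, (∀ t, WengerIncident (P t) (L t)) ∧
      (∀ t, WengerIncident (P (t + 1)) (L t)) ∧ (∀ t, P t ≠ P (t + 1)) ∧ ∀ t, L t ≠ L (t + 1) := by
  -- `P t` and `L t` will sit at positions `e t` and `e t + 1` of the cycle
  let e : Fin 5 → Fin 10 := fun t => ⟨2 * t, by omega⟩
  have he : ∀ t, e (t + 1) = e t + 1 + 1 := by decide
  have he_ne : ∀ t, e t ≠ e (t + 1) ∧ e t + 1 ≠ e (t + 1) + 1 := by decide
  have hpoint : ∀ t, ∃ p, w (e t) = .inl p := by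
    intro t
    induction t using Fin.induction with
    | zero => exact h0
    | succ t ih =>
      obtain ⟨p, hp⟩ := ih
      obtain ⟨l, hl, -⟩ := exists_eq_inr_of_wengerGraph_adj (hp ▸ hw (e t.castSucc))
      obtain ⟨p', hp', -⟩ := exists_eq_inl_of_wengerGraph_adj (hl ▸ hw (e t.castSucc + 1))
      exact ⟨p', by rwa [← Fin.coeSucc_eq_succ, he]⟩
  choose P hP using hpoint
  have hline : ∀ t, ∃ l, w (e t + 1) = .inr l ∧ WengerIncident (P t) l :=
    fun t => exists_eq_inr_of_wengerGraph_adj (hP t ▸ hw (e t))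
  choose L hL hinc using hline
  refine ⟨P, L, hinc, fun t => ?_, fun t h => ?_, fun t h => ?_⟩
  · obtain ⟨p, hp, hpL⟩ := exists_eq_inl_of_wengerGraph_adj (hL t ▸ hw (e t + 1))
    rw [← he, hP, Sum.inl.injEq] at hp
    exact hp ▸ hpL
  · exact (he_ne t).1 (hinj (by rw [hP, hP, h]))
  · exact (he_ne t).2 (hinj (by rw [hL, hL, h]))

end Wenger

theorem wengerGraph_not_containsSub_cycleGraph_ten (F : Type) [Field F] {k : ℕ} (hk : 4 ≤ k) :
    ¬ ContainsSub (cycleGraph 10) (wengerGraph F k) := by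
  rintro ⟨f, hf⟩
  have hadj : ∀ i, (wengerGraph F k).Adj (f i) (f (i + 1)) :=
    fun i => f.map_adj (cycleGraph_adj.2 (.inr (add_sub_cancel_left i 1)))
  -- rotate the cycle by one step if necessary so that it starts at a point
  obtain ⟨w, hw, hwinj, h0⟩ : ∃ w : Fin 10 → _, (∀ i, (wengerGraph F k).Adj (w i) (w (i + 1))) ∧
      Function.Injective w ∧ ∃ p, w 0 = .inl p := by
    rcases h : f 0 with p | _
    · exact ⟨f, hadj, hf, p, h⟩
    · obtain ⟨p, hp, -⟩ := exists_eq_inl_of_wengerGraph_adj (h ▸ hadj 0)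
      exact ⟨fun i => f (i + 1), fun i => hadj _, hf.comp (add_left_injective 1), p, hp⟩
  obtain ⟨P, L, hinc, hinc', hP, hL⟩ := exists_wengerIncident_pentagon hw hwinj h0
  exact WengerIncident.false_of_pentagon hk hinc hinc' hP hL

section Partition

variable {F : Type*}

def wengerKey : (Fin 5 → F) ⊕ (Fin 5 → F) → Fin 3 → F
  | .inl p => ![p 0, p 3, p 4]
  | .inr l => ![l 0, l 1, l 2]

theorem card_filter_wengerKey_le [Fintype F] [DecidableEq F] (c : Fin 3 → F) :
    #{v | wengerKey v = c} ≤ 2 * Fintype.card F ^ 2 := by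
  let g : (F × F) ⊕ (F × F) → (Fin 5 → F) ⊕ (Fin 5 → F) :=
    Sum.map (fun x => ![c 0, x.1, x.2, c 1, c 2]) (fun x => ![c 0, c 1, c 2, x.1, x.2])
  calc #{v | wengerKey v = c} ≤ #(univ.image g) := card_le_card fun v hv => ?_
    _ ≤ Fintype.card ((F × F) ⊕ (F × F)) := card_image_le
    _ = 2 * Fintype.card F ^ 2 := by simp only [Fintype.card_sum, Fintype.card_prod]; ring
  rw [mem_filter] at hv
  rcases v with p | l
  · refine mem_image.2 ⟨.inl (p 1, p 2), mem_univ _, congrArg Sum.inl (funext fun j => ?_)⟩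
    fin_cases j <;> simp [← hv.2, wengerKey]
  · refine mem_image.2 ⟨.inr (l 3, l 4), mem_univ _, congrArg Sum.inr (funext fun j => ?_)⟩
    fin_cases j <;> simp [← hv.2, wengerKey]

theorem exists_wengerIncident_wengerKey [Field F] (a b : Fin 3 → F) :
    ∃ p l, wengerKey (.inl p) = a ∧ wengerKey (.inr l) = b ∧ WengerIncident p l := by
  -- the incidence equations determine `p 1`, `p 2` from the line key and `l 3`, `l 4` from the point key
  let p₁ := b 1 - b 0 * a 0
  let p₂ := b 2 - b 0 * p₁
  refine ⟨![a 0, p₁, p₂, a 1, a 2], ![b 0, b 1, b 2, a 1 + b 0 * p₂, a 2 + b 0 * a 1],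
    funext fun j => ?_, funext fun j => ?_, fun j => ?_⟩ <;> fin_cases j <;> simp [wengerKey, p₁, p₂]

end Partition

theorem fGraph_cycleGraph_ten_le (F : Type) [Field F] [Fintype F] :
    fGraph (cycleGraph 10) (Fintype.card F ^ 3) ≤ 2 * Fintype.card F ^ 2 := by
  classical
  refine fGraph_le_of_isRKGraph (wengerGraph_not_containsSub_cycleGraph_ten F le_rfl) ?_
  have := isRKGraph_of_key (wengerGraph F 4) wengerKey card_filter_wengerKey_le fun a b _ =>
    let ⟨p, l, ha, hb, h⟩ := exists_wengerIncident_wengerKey a b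
    ⟨.inl p, .inr l, ha, hb, h⟩
  rwa [Fintype.card_fun, Fintype.card_fin] at this

/-- For every prime power `q`, `f(q³, C_{10}) ≤ 2q²`. -/
theorem stmt17 (q : ℕ) (hq : IsPrimePow q) :
    fGraph (SimpleGraph.cycleGraph 10) (q ^ 3) ≤ 2 * q ^ 2 := by
  obtain ⟨p, n, hp, hn, rfl⟩ := hq
  have : Fact p.Prime := ⟨hp.nat_prime⟩
  let := Fintype.ofFinite (GaloisField p n)
  have hcard : Fintype.card (GaloisField p n) = p ^ n := by
    rw [← Nat.card_eq_fintype_card, GaloisField.card p n hn.ne']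
  simpa [hcard] using fGraph_cycleGraph_ten_le (GaloisField p n)
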